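/- Let V be a U_q^∨-module that is a finite-dimensional 𝔽-vector space of positive dimension. Then the following are equivalent: (i) the action of U_q^∨ on V extends to an action of U_q(𝔰𝔩₂) on V (i.e., there is a U_q(𝔰𝔩₂)-module structure on V whose restriction to U_q^∨ is the given one); (ii) the element y⁻¹ acts on V as an invertible linear map; (iii) the element a⁻¹x − aX acts on V as an invertible linear map; (iv) the element az − a⁻¹Z acts on V as an invertible linear map. -/

import Mathlib

namespace Paper


/-- Generators for the equitable presentation of `U_q(sl2)`: `x`, `y`, `y⁻¹`, `z`. -/
inductive EqGen : Type
  | x | y | y' | z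

/-- The defining relations of the equitable presentation of `U_q(sl2)`. -/
inductive EqRel (F : Type*) [Field F] (q : F) :
    FreeAlgebra F EqGen → FreeAlgebra F EqGen → Prop
  | yy' : EqRel F q (FreeAlgebra.ι F EqGen.y * FreeAlgebra.ι F EqGen.y') 1
  | y'y : EqRel F q (FreeAlgebra.ι F EqGen.y' * FreeAlgebra.ι F EqGen.y) 1
  | xy : EqRel F q
      (q • (FreeAlgebra.ι F EqGen.x * FreeAlgebra.ι F EqGen.y)
        - q⁻¹ • (FreeAlgebra.ι F EqGen.y * FreeAlgebra.ι F EqGen.x))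
      ((q - q⁻¹) • (1 : FreeAlgebra F EqGen))
  | yz : EqRel F q
      (q • (FreeAlgebra.ι F EqGen.y * FreeAlgebra.ι F EqGen.z)
        - q⁻¹ • (FreeAlgebra.ι F EqGen.z * FreeAlgebra.ι F EqGen.y))
      ((q - q⁻¹) • (1 : FreeAlgebra F EqGen))
  | zx : EqRel F q
      (q • (FreeAlgebra.ι F EqGen.z * FreeAlgebra.ι F EqGen.x)
        - q⁻¹ • (FreeAlgebra.ι F EqGen.x * FreeAlgebra.ι F EqGen.z))
      ((q - q⁻¹) • (1 : FreeAlgebra F EqGen))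

/-- `U_q(sl2)` in its equitable presentation. -/
abbrev Usl2 (F : Type*) [Field F] (q : F) := RingQuot (EqRel F q)

noncomputable def ux (F : Type*) [Field F] (q : F) : Usl2 F q :=
  RingQuot.mkAlgHom F (EqRel F q) (FreeAlgebra.ι F EqGen.x)

noncomputable def uy (F : Type*) [Field F] (q : F) : Usl2 F q :=
  RingQuot.mkAlgHom F (EqRel F q) (FreeAlgebra.ι F EqGen.y)

noncomputable def uy' (F : Type*) [Field F] (q : F) : Usl2 F q :=
  RingQuot.mkAlgHom F (EqRel F q) (FreeAlgebra.ι F EqGen.y')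

noncomputable def uz (F : Type*) [Field F] (q : F) : Usl2 F q :=
  RingQuot.mkAlgHom F (EqRel F q) (FreeAlgebra.ι F EqGen.z)

/-- `X = a⁻²x + (1 − a⁻²)y⁻¹`. -/
noncomputable def uX (F : Type*) [Field F] (q a : F) : Usl2 F q :=
  (a ^ 2)⁻¹ • ux F q + (1 - (a ^ 2)⁻¹) • uy' F q

/-- `Z = a²z + (1 − a²)y⁻¹`. -/
noncomputable def uZ (F : Type*) [Field F] (q a : F) : Usl2 F q :=
  a ^ 2 • uz F q + (1 - a ^ 2) • uy' F q

/-- `A = a⁻¹x + az`. -/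
noncomputable def uA (F : Type*) [Field F] (q a : F) : Usl2 F q :=
  a⁻¹ • ux F q + a • uz F q

/-- `U_q^∨`, the subalgebra of `U_q(sl2)` generated by `x`, `y⁻¹`, `z`. -/
noncomputable def Uvee (F : Type*) [Field F] (q : F) : Subalgebra F (Usl2 F q) :=
  Algebra.adjoin F {ux F q, uy' F q, uz F q}


lemma ux_mem (F : Type*) [Field F] (q : F) : ux F q ∈ Uvee F q :=
  Algebra.subset_adjoin (by simp)

lemma uy'_mem (F : Type*) [Field F] (q : F) : uy' F q ∈ Uvee F q :=
  Algebra.subset_adjoin (by simp)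

lemma uz_mem (F : Type*) [Field F] (q : F) : uz F q ∈ Uvee F q :=
  Algebra.subset_adjoin (by simp)

lemma uX_mem (F : Type*) [Field F] (q a : F) : uX F q a ∈ Uvee F q :=
  add_mem ((Uvee F q).smul_mem (ux_mem F q) _) ((Uvee F q).smul_mem (uy'_mem F q) _)

lemma uZ_mem (F : Type*) [Field F] (q a : F) : uZ F q a ∈ Uvee F q :=
  add_mem ((Uvee F q).smul_mem (uz_mem F q) _) ((Uvee F q).smul_mem (uy'_mem F q) _)

/-!
The elements in (iii) and (iv) equal `(a⁻¹ - a) y⁻¹` and `(a - a⁻¹) y⁻¹`, nonzero multiples of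
`y⁻¹` since `a² ≠ 1`, so everything reduces to (i) ⇔ (ii). Conjugating by `y⁻¹` turns each
defining relation that involves `y` into a relation among `x, y⁻¹, z` alone, which therefore holds
in `U_q^∨`. Conversely, when `y⁻¹` acts invertibly, conjugating these back shows that the images of
`x`, `z`, `y⁻¹` and the inverse of the latter satisfy the defining relations of `U_q(sl2)`, so
they define the extension.
-/

section QCommutator

variable {F A : Type*} [Field F] [Ring A] [Algebra F A]

def qCommutator (q : F) (s t : A) : A := q • (s * t) - q⁻¹ • (t * s)

/-- Two-sided multiplication by `u` carries `[s, u⁻¹]_q` to `[u, s]_q`. -/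
lemma qCommutator_inv_right_eq_smul_one_iff (u : Aˣ) (q c : F) (s : A) :
    qCommutator q s ↑u⁻¹ = c • (1 : A) ↔ qCommutator q ↑u s = c • (↑u * ↑u) := by
  have key : ↑u * qCommutator q s ↑u⁻¹ * ↑u = qCommutator q ↑u s := by
    simp only [qCommutator, mul_sub, sub_mul, mul_smul_comm, smul_mul_assoc, mul_assoc,
      Units.inv_mul, mul_one, Units.mul_inv_cancel_left]
  rw [← key, show c • (↑u * ↑u : A) = ↑u * (c • 1) * ↑u by
    rw [mul_smul_comm, mul_one, smul_mul_assoc], Units.mul_left_inj, Units.mul_right_inj]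

lemma qCommutator_inv_left_eq_smul_one_iff (u : Aˣ) (q c : F) (s : A) :
    qCommutator q ↑u⁻¹ s = c • (1 : A) ↔ qCommutator q s ↑u = c • (↑u * ↑u) := by
  have key : ↑u * qCommutator q ↑u⁻¹ s * ↑u = qCommutator q s ↑u := by
    simp only [qCommutator, mul_sub, sub_mul, mul_smul_comm, smul_mul_assoc, mul_assoc,
      Units.inv_mul, mul_one, Units.mul_inv_cancel_left]
  rw [← key, show c • (↑u * ↑u : A) = ↑u * (c • 1) * ↑u by
    rw [mul_smul_comm, mul_one, smul_mul_assoc], Units.mul_left_inj, Units.mul_right_inj]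

end QCommutator

section Relations

variable {F : Type*} [Field F] {q : F}

lemma uy_mul_uy' : uy F q * uy' F q = 1 := by
  simpa only [uy, uy', map_mul, map_one] using RingQuot.mkAlgHom_rel F (EqRel.yy' (q := q))

lemma uy'_mul_uy : uy' F q * uy F q = 1 := by
  simpa only [uy, uy', map_mul, map_one] using RingQuot.mkAlgHom_rel F (EqRel.y'y (q := q))

lemma qCommutator_ux_uy : qCommutator q (ux F q) (uy F q) = (q - q⁻¹) • (1 : Usl2 F q) := by
  simpa only [qCommutator, ux, uy, map_sub, map_smul, map_mul, map_one] using
    RingQuot.mkAlgHom_rel F (EqRel.xy (q := q))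

lemma qCommutator_uy_uz : qCommutator q (uy F q) (uz F q) = (q - q⁻¹) • (1 : Usl2 F q) := by
  simpa only [qCommutator, uy, uz, map_sub, map_smul, map_mul, map_one] using
    RingQuot.mkAlgHom_rel F (EqRel.yz (q := q))

lemma qCommutator_uz_ux : qCommutator q (uz F q) (ux F q) = (q - q⁻¹) • (1 : Usl2 F q) := by
  simpa only [qCommutator, ux, uz, map_sub, map_smul, map_mul, map_one] using
    RingQuot.mkAlgHom_rel F (EqRel.zx (q := q))

noncomputable def uy'Unit : (Usl2 F q)ˣ := ⟨uy' F q, uy F q, uy'_mul_uy, uy_mul_uy'⟩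

lemma qCommutator_uy'_ux :
    qCommutator q (uy' F q) (ux F q) = (q - q⁻¹) • (uy' F q * uy' F q) :=
  (qCommutator_inv_right_eq_smul_one_iff uy'Unit q _ _).1 qCommutator_ux_uy

lemma qCommutator_uz_uy' :
    qCommutator q (uz F q) (uy' F q) = (q - q⁻¹) • (uy' F q * uy' F q) :=
  (qCommutator_inv_left_eq_smul_one_iff uy'Unit q _ _).1 qCommutator_uy_uz

lemma inv_smul_ux_sub_smul_uX {a : F} (ha : a ≠ 0) :
    a⁻¹ • ux F q - a • uX F q a = (a⁻¹ - a) • uy' F q := by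
  rw [uX, smul_add, smul_smul, smul_smul, show a * (a ^ 2)⁻¹ = a⁻¹ by field_simp,
    show a * (1 - (a ^ 2)⁻¹) = a - a⁻¹ by field_simp]
  module

lemma smul_uz_sub_inv_smul_uZ {a : F} (ha : a ≠ 0) :
    a • uz F q - a⁻¹ • uZ F q a = (a - a⁻¹) • uy' F q := by
  rw [uZ, smul_add, smul_smul, smul_smul, show a⁻¹ * a ^ 2 = a by field_simp,
    show a⁻¹ * (1 - a ^ 2) = a⁻¹ - a by field_simp]
  module

end Relations

section Extension

variable {F B : Type*} [Field F] {q : F} [Ring B] [Algebra F B]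
  (f : EqGen → B) (hyy' : f .y * f .y' = 1) (hy'y : f .y' * f .y = 1)
  (hxy : qCommutator q (f .x) (f .y) = (q - q⁻¹) • 1)
  (hyz : qCommutator q (f .y) (f .z) = (q - q⁻¹) • 1)
  (hzx : qCommutator q (f .z) (f .x) = (q - q⁻¹) • 1)

noncomputable def liftUsl2 : Usl2 F q →ₐ[F] B :=
  RingQuot.liftAlgHom F ⟨FreeAlgebra.lift F f, fun _ _ h => by
    cases h <;>
      simpa only [map_sub, map_smul, map_mul, map_one, FreeAlgebra.lift_ι_apply, qCommutator]⟩

lemma liftUsl2_mkAlgHom_ι (g : EqGen) :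
    liftUsl2 f hyy' hy'y hxy hyz hzx (RingQuot.mkAlgHom F _ (FreeAlgebra.ι F g)) = f g := by
  rw [liftUsl2, RingQuot.liftAlgHom_mkAlgHom_apply, FreeAlgebra.lift_ι_apply]

local notation "vx" => (Subtype.mk (ux F q) (ux_mem F q) : Uvee F q)
local notation "vy'" => (Subtype.mk (uy' F q) (uy'_mem F q) : Uvee F q)
local notation "vz" => (Subtype.mk (uz F q) (uz_mem F q) : Uvee F q)

theorem exists_extension_iff_isUnit (ρ : Uvee F q →ₐ[F] B) :
    (∃ ρ' : Usl2 F q →ₐ[F] B, ρ'.comp (Uvee F q).val = ρ) ↔ IsUnit (ρ vy') := by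
  constructor
  · rintro ⟨ρ', rfl⟩
    exact uy'Unit.isUnit.map ρ'
  · rintro ⟨u, hu⟩
    have hxy : qCommutator q (ρ vx) ↑u⁻¹ = (q - q⁻¹) • 1 := by
      rw [qCommutator_inv_right_eq_smul_one_iff, hu]
      simpa only [qCommutator, map_sub, map_smul, map_mul] using
        congrArg ρ (Subtype.ext qCommutator_uy'_ux :
          qCommutator q vy' vx = (q - q⁻¹) • (vy' * vy'))
    have hyz : qCommutator q ↑u⁻¹ (ρ vz) = (q - q⁻¹) • 1 := by
      rw [qCommutator_inv_left_eq_smul_one_iff, hu]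
      simpa only [qCommutator, map_sub, map_smul, map_mul] using
        congrArg ρ (Subtype.ext qCommutator_uz_uy' :
          qCommutator q vz vy' = (q - q⁻¹) • (vy' * vy'))
    have hzx : qCommutator q (ρ vz) (ρ vx) = (q - q⁻¹) • 1 := by
      simpa only [qCommutator, map_sub, map_smul, map_mul, map_one] using
        congrArg ρ (Subtype.ext qCommutator_uz_ux : qCommutator q vz vx = (q - q⁻¹) • 1)
    let f : EqGen → B
      | .x => ρ vx | .y => ↑u⁻¹ | .y' => ↑u | .z => ρ vz
    refine ⟨liftUsl2 f u.inv_mul u.mul_inv hxy hyz hzx, AlgHom.ext_of_eq_adjoin rfl ?_⟩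
    rintro _ (rfl | rfl | rfl)
    · exact liftUsl2_mkAlgHom_ι f _ _ _ _ _ .x
    · exact (liftUsl2_mkAlgHom_ι f _ _ _ _ _ .y').trans hu
    · exact liftUsl2_mkAlgHom_ι f _ _ _ _ _ .z

end Extension

theorem statement18_general (F : Type*) [Field F] (q : F)
    (a : F) (ha0 : a ≠ 0) (ha2 : a ^ 2 ≠ 1)
    (V : Type*) [AddCommGroup V] [Module F V]
    (ρ : Uvee F q →ₐ[F] Module.End F V) :
    List.TFAE
      [ ∃ ρ' : Usl2 F q →ₐ[F] Module.End F V, ρ'.comp (Uvee F q).val = ρ,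
        IsUnit (ρ ⟨uy' F q, uy'_mem F q⟩),
        IsUnit (ρ ⟨a⁻¹ • ux F q - a • uX F q a,
          sub_mem ((Uvee F q).smul_mem (ux_mem F q) _)
            ((Uvee F q).smul_mem (uX_mem F q a) _)⟩),
        IsUnit (ρ ⟨a • uz F q - a⁻¹ • uZ F q a,
          sub_mem ((Uvee F q).smul_mem (uz_mem F q) _)
            ((Uvee F q).smul_mem (uZ_mem F q a) _)⟩) ] := by
  have ha : a⁻¹ ≠ a := fun h => ha2 (by rw [sq, ← mul_inv_cancel₀ ha0, h])
  tfae_have 1 ↔ 2 := exists_extension_iff_isUnit ρ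
  tfae_have 3 ↔ 2 := by
    rw [show (⟨a⁻¹ • ux F q - a • uX F q a, _⟩ : Uvee F q) = (a⁻¹ - a) • ⟨uy' F q, uy'_mem F q⟩
      from Subtype.ext (inv_smul_ux_sub_smul_uX ha0), map_smul]
    exact isUnit_smul_iff (Units.mk0 _ (sub_ne_zero.2 ha)) _
  tfae_have 4 ↔ 2 := by
    rw [show (⟨a • uz F q - a⁻¹ • uZ F q a, _⟩ : Uvee F q) = (a - a⁻¹) • ⟨uy' F q, uy'_mem F q⟩
      from Subtype.ext (smul_uz_sub_inv_smul_uZ ha0), map_smul]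
    exact isUnit_smul_iff (Units.mk0 _ (sub_ne_zero.2 ha.symm)) _
  tfae_finish

/-- **Lemma 11.9.** Let `V` be a finite-dimensional `U_q^∨`-module of positive
dimension (given by `ρ : U_q^∨ → End(V)`). The following are equivalent:
(i) the `U_q^∨`-action extends to a `U_q(sl2)`-action on `V`;
(ii) `y⁻¹` acts invertibly on `V`;
(iii) `a⁻¹x − aX` acts invertibly on `V`;
(iv) `az − a⁻¹Z` acts invertibly on `V`. -/
theorem statement18 (F : Type*) [Field F] (q : F) (hq0 : q ≠ 0) (hq4 : q ^ 4 ≠ 1)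
    (a : F) (ha0 : a ≠ 0) (ha2 : a ^ 2 ≠ 1)
    (V : Type*) [AddCommGroup V] [Module F V] [FiniteDimensional F V]
    (hV : 0 < Module.finrank F V)
    (ρ : Uvee F q →ₐ[F] Module.End F V) :
    List.TFAE
      [ ∃ ρ' : Usl2 F q →ₐ[F] Module.End F V, ρ'.comp (Uvee F q).val = ρ,
        IsUnit (ρ ⟨uy' F q, uy'_mem F q⟩),
        IsUnit (ρ ⟨a⁻¹ • ux F q - a • uX F q a,
          sub_mem ((Uvee F q).smul_mem (ux_mem F q) _)
            ((Uvee F q).smul_mem (uX_mem F q a) _)⟩),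
        IsUnit (ρ ⟨a • uz F q - a⁻¹ • uZ F q a,
          sub_mem ((Uvee F q).smul_mem (uz_mem F q) _)
            ((Uvee F q).smul_mem (uZ_mem F q a) _)⟩) ] :=
  statement18_general F q a ha0 ha2 V ρ

end Paper
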